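/- arXiv:2305.18936 — 3 statements merged into one kernel-verified Lean document; each statement's English description precedes it below -/
import Mathlib

section
/- Let G be a finite group, Γ = Pow(G), and let v ∈ G be a CC-generator whose order o(v) is not a prime power. Then the closed-twin-class of v in Γ_v = Γ[N_Γ[v]] (equivalently, the set of dominating vertices of Γ_v) has exactly φ(o(v)) + 1 elements, where φ is Euler's totient function. -/
/-- The power graph of a group `G`: distinct `x` and `y` are adjacent iff
`x ∈ ⟨y⟩` or `y ∈ ⟨x⟩`. -/
def powGraph (G : Type*) [Group G] : SimpleGraph G where
  Adj x y := x ≠ y ∧ (x ∈ Subgroup.zpowers y ∨ y ∈ Subgroup.zpowers x)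
  symm := by
    constructor
    rintro x y ⟨hne, h⟩
    exact ⟨hne.symm, h.symm⟩
  loopless := by
    constructor
    rintro x ⟨hne, -⟩
    exact hne rfl

/-- The closed neighborhood of a vertex in a simple graph. -/
def closedNbhd {V : Type*} (X : SimpleGraph V) (v : V) : Set V :=
  insert v (X.neighborSet v)

theorem self_mem_closedNbhd {V : Type*} (X : SimpleGraph V) (v : V) :
    v ∈ closedNbhd X v := Set.mem_insert v _

/-- `Γ_v`: the subgraph of the power graph induced on the closed neighborhood of `v`. -/
def powLocal (G : Type*) [Group G] (v : G) :
    SimpleGraph (closedNbhd (powGraph G) v) :=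
  SimpleGraph.induce (closedNbhd (powGraph G) v) (powGraph G)

/-- `v` is a CC-generator: `⟨v⟩` is not properly contained in any cyclic subgroup,
i.e. `v ∈ ⟨g⟩` implies `⟨g⟩ = ⟨v⟩`. -/
def IsCCGenerator {G : Type*} [Group G] (v : G) : Prop :=
  ∀ g : G, v ∈ Subgroup.zpowers g → Subgroup.zpowers g = Subgroup.zpowers v

/-! Since `v` is a CC-generator, a neighbour of `v` cannot generate a larger cyclic group, so
`N[v] = ⟨v⟩`: `Γ_v` is the power graph of the cyclic group `⟨v⟩` of order `n = o(v)`, and `v`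
dominates it, so the twin class of `v` is the set of dominating vertices. As `⟨v⟩` contains an
element of every order `d ∣ n`, a dominating `w` has order comparable under divisibility with
every divisor of `n`; when `n` is not a prime power this leaves only `o(w) = 1` and `o(w) = n`,
i.e. the identity and the `φ(n)` generators of `⟨v⟩`. -/

open Subgroup

theorem Nat.eq_one_or_eq_of_forall_dvd_or_dvd {m n : ℕ} (hn : ¬∃ p i : ℕ, p.Prime ∧ n = p ^ i)
    (hmn : m ∣ n) (hcomp : ∀ d, d ∣ n → d ∣ m ∨ m ∣ d) : m = 1 ∨ m = n := by
  rcases eq_or_ne n 0 with rfl | hn0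
  · rcases hcomp (m + 1) (dvd_zero _) with h | h
    · exact .inr (Nat.eq_zero_of_dvd_of_lt h (lt_add_one m))
    · exact .inl (Nat.dvd_one.mp ((Nat.dvd_add_right (dvd_refl m)).mp h))
  by_contra! ⟨hm1, hmn'⟩
  have hm0 : m ≠ 0 := ne_zero_of_dvd_ne_zero hn0 hmn
  by_cases hpp : ∃ p i : ℕ, p.Prime ∧ m = p ^ i
  · obtain ⟨p, i, hp, rfl⟩ := hpp
    have hi : i ≠ 0 := by rintro rfl; exact hm1 (pow_zero p)
    obtain ⟨q, hq, hqn, hqp⟩ : ∃ q, q.Prime ∧ q ∣ n ∧ q ≠ p := by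
      by_contra! h
      exact hn ⟨p, _, hp, Nat.eq_prime_pow_of_unique_prime_dvd hn0 (h _ · ·)⟩
    rcases hcomp q hqn with h | h
    · exact hqp ((Nat.prime_dvd_prime_iff_eq hq hp).mp (hq.dvd_of_dvd_pow h))
    · rcases (Nat.dvd_prime hq).mp h with h | h
      · exact hm1 h
      · exact hqp ((Nat.prime_dvd_prime_iff_eq hp hq).mp (h ▸ dvd_pow_self p hi)).symm
  · obtain ⟨p, hlt⟩ : ∃ p, m.factorization p < n.factorization p := by
      by_contra! h
      exact hmn' (Nat.dvd_antisymm hmn ((Nat.factorization_le_iff_dvd hn0 hm0).mp h))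
    have hp : p.Prime := by
      by_contra h
      simp [Nat.factorization_eq_zero_of_not_prime _ h] at hlt
    rcases hcomp _ (Nat.ordProj_dvd n p) with h | h
    · exact (hp.pow_dvd_iff_le_factorization hm0).mp h |>.not_gt hlt
    · obtain ⟨j, -, rfl⟩ := (Nat.dvd_prime_pow hp).mp h
      exact hpp ⟨p, j, hp, rfl⟩

theorem closedNbhd_eq_univ_iff {V : Type*} {X : SimpleGraph V} {w : V} :
    closedNbhd X w = Set.univ ↔ ∀ u, u ≠ w → X.Adj w u := by
  simp only [closedNbhd, Set.eq_univ_iff_forall, Set.mem_insert_iff, SimpleGraph.mem_neighborSet]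
  exact forall_congr' fun u => or_iff_not_imp_left

section PowerGraph

variable {G : Type*} [Group G] {v : G}

theorem zpowers_eq_of_mem_of_orderOf_eq {w : G} (hv : IsOfFinOrder v) (hw : w ∈ zpowers v)
    (ho : orderOf w = orderOf v) : zpowers w = zpowers v :=
  have := hv.finite_zpowers.to_subtype
  eq_of_le_of_card_ge (zpowers_le.mpr hw) (by rw [Nat.card_zpowers, Nat.card_zpowers, ho])

theorem ncard_setOf_orderOf_eq_inter_zpowers (hv : IsOfFinOrder v) :
    ({g | orderOf g = orderOf v} ∩ (zpowers v : Set G)).ncard = (orderOf v).totient := by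
  have := hv.finite_zpowers.to_subtype
  have := Fintype.ofFinite (zpowers v)
  rw [← Set.ofPred_mem_eq (s := (zpowers v : Set G)), ← Set.ncard_subtype]
  change {a : zpowers v | orderOf (a : G) = orderOf v}.ncard = _
  simp only [orderOf_coe]
  rw [Set.ncard_eq_toFinset_card', Set.toFinset_ofPred]
  exact IsCyclic.card_orderOf_eq_totient (by rw [← Nat.card_eq_fintype_card, Nat.card_zpowers])

theorem forall_mem_zpowers_comparable_iff {w : G} (hv : IsOfFinOrder v)
    (hnpp : ¬∃ p i : ℕ, p.Prime ∧ orderOf v = p ^ i) (hw : w ∈ zpowers v) :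
    (∀ u ∈ zpowers v, u ∈ zpowers w ∨ w ∈ zpowers u) ↔ w = 1 ∨ orderOf w = orderOf v := by
  constructor
  · intro h
    refine (Nat.eq_one_or_eq_of_forall_dvd_or_dvd hnpp (orderOf_dvd_of_mem_zpowers hw) ?_).imp_left
      orderOf_eq_one_iff.mp
    intro d hd
    have hord := orderOf_pow_orderOf_div hv.orderOf_pos.ne' hd
    rcases h _ (pow_mem (mem_zpowers v) (orderOf v / d)) with hmem | hmem
    · exact .inl (hord ▸ orderOf_dvd_of_mem_zpowers hmem)
    · exact .inr (hord ▸ orderOf_dvd_of_mem_zpowers hmem)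
  · rintro (rfl | ho) u hu
    · exact .inr (one_mem _)
    · exact .inl (zpowers_eq_of_mem_of_orderOf_eq hv hw ho ▸ hu)

theorem closedNbhd_powGraph_eq_zpowers (hv : IsCCGenerator v) :
    closedNbhd (powGraph G) v = zpowers v := by
  ext x
  constructor
  · rintro (rfl | ⟨-, h | h⟩)
    · exact mem_zpowers x
    · exact hv x h ▸ mem_zpowers x
    · exact h
  · intro hx
    rcases eq_or_ne x v with rfl | hxv
    · exact self_mem_closedNbhd _ x
    · exact Set.mem_insert_of_mem _ ⟨hxv.symm, .inr hx⟩

theorem closedNbhd_powLocal_eq_univ_iff (hv : IsCCGenerator v) (w : closedNbhd (powGraph G) v) :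
    closedNbhd (powLocal G v) w = Set.univ ↔
      ∀ u ∈ zpowers v, u ∈ zpowers (w : G) ∨ (w : G) ∈ zpowers u := by
  have hN := closedNbhd_powGraph_eq_zpowers hv
  rw [closedNbhd_eq_univ_iff]
  constructor
  · intro h u hu
    rcases eq_or_ne u w with huw | huw
    · exact .inl (huw ▸ mem_zpowers _)
    · exact (h ⟨u, by rwa [hN]⟩ (Subtype.coe_ne_coe.mp huw)).2.symm
  · intro h u huw
    exact ⟨Subtype.coe_ne_coe.mpr huw.symm, (h u (by simpa [hN] using u.2)).symm⟩

end PowerGraph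

/-- For a CC-generator `v` whose order is not a prime power, the closed-twin-class of
`v` in `Γ_v` has exactly `φ(o(v)) + 1` elements. -/
theorem twin_class_of_ccGenerator_card
    {G : Type*} [Group G] [Finite G] (v : G)
    (hcc : IsCCGenerator v)
    (hnpp : ¬ ∃ p i : ℕ, p.Prime ∧ orderOf v = p ^ i) :
    {w : closedNbhd (powGraph G) v |
        closedNbhd (powLocal G v) w =
          closedNbhd (powLocal G v) ⟨v, self_mem_closedNbhd _ v⟩}.ncard =
      Nat.totient (orderOf v) + 1 := by
  have hv := isOfFinOrder_of_finite v
  have hN := closedNbhd_powGraph_eq_zpowers hcc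
  have hdom (w : closedNbhd (powGraph G) v) : closedNbhd (powLocal G v) w = Set.univ ↔
      (w : G) ∈ insert 1 {g | orderOf g = orderOf v} :=
    (closedNbhd_powLocal_eq_univ_iff hcc w).trans
      (forall_mem_zpowers_comparable_iff hv hnpp (by simpa [hN] using w.2))
  have hv1 : orderOf v ≠ 1 := fun h => hnpp ⟨2, 0, Nat.prime_two, h⟩
  simp only [(hdom ⟨v, self_mem_closedNbhd _ v⟩).mpr (.inr rfl), hdom]
  rw [Set.ncard_subtype, hN, Set.ofPred_mem_eq, Set.insert_inter_of_mem (one_mem _),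
    Set.ncard_insert_of_notMem (by simp [hv1.symm]), ncard_setOf_orderOf_eq_inter_zpowers hv]
end

section
/- Let G be a finite group, Γ = Pow(G), and let v ∈ G be a CC-generator whose order o(v) is not a prime power. Then for every divisor k of o(v) with 1 < k < o(v), there is a closed-twin-class of Γ_v = Γ[N_Γ[v]] of size exactly φ(k); moreover φ(k) divides φ(o(v)). -/
/-!
Since `v` is a CC-generator, its closed neighbourhood in `Pow(G)` is the cyclic group `⟨v⟩`, in
which `x ∈ ⟨y⟩` iff `o(x) ∣ o(y)`. Hence two vertices of `Γ_v` are closed twins iff their orders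
are comparable (for divisibility) with the same divisors of `o(v)`. When `o(v)` is not a prime
power, a divisor `k` with `1 < k < o(v)` is determined by the set of divisors comparable with it,
so the twin class of an element of order `k` consists of the `φ(k)` elements of `⟨v⟩` of order `k`.
-/

open Finset Subgroup Relation

namespace Nat

lemma exists_prime_factorization_lt_of_dvd {a b : ℕ} (hb : b ≠ 0) (hab : a ∣ b) (hne : a ≠ b) :
    ∃ p, p.Prime ∧ a.factorization p < b.factorization p := by
  obtain ⟨c, rfl⟩ := hab
  have hc : c ≠ 1 := by rintro rfl; exact hne (mul_one a).symm
  obtain ⟨p, hp, hpc⟩ := exists_prime_and_dvd hc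
  refine ⟨p, hp, ?_⟩
  rw [factorization_mul (left_ne_zero_of_mul hb) (right_ne_zero_of_mul hb), Finsupp.add_apply]
  have := hp.factorization_pos_of_dvd (right_ne_zero_of_mul hb) hpc
  omega

lemma exists_prime_dvd_ne_of_not_prime_pow {n : ℕ} (hn : ¬∃ p i : ℕ, p.Prime ∧ n = p ^ i)
    (p : ℕ) : ∃ q, q.Prime ∧ q ∣ n ∧ q ≠ p := by
  by_contra! h
  rcases eq_or_ne n 0 with rfl | hn0
  · obtain ⟨q, hpq, hq⟩ := exists_infinite_primes (p + 1)
    exact absurd (h q hq (dvd_zero q)) (by omega)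
  have hp : ∀ {q}, q.Prime → q ∣ n → q = p := fun hq hqn => h _ hq hqn
  have hn1 : n ≠ 1 := by rintro rfl; exact hn ⟨2, 0, prime_two, rfl⟩
  obtain ⟨q, hq, hqn⟩ := exists_prime_and_dvd hn1
  exact hn ⟨p, _, hp hq hqn ▸ hq, eq_prime_pow_of_unique_prime_dvd hn0 hp⟩

lemma exists_dvd_not_symmGen_iff {n a b : ℕ} (hn : ¬∃ p i : ℕ, p.Prime ∧ n = p ^ i)
    (hn0 : n ≠ 0) (ha : 1 < a) (hab : a ∣ b) (hbn : b ∣ n) (hne : a ≠ b) :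
    ∃ e, e ∣ n ∧ ¬(SymmGen (· ∣ ·) e a ↔ SymmGen (· ∣ ·) e b) := by
  have hb : b ≠ 0 := ne_zero_of_dvd_ne_zero hn0 hbn
  by_cases hapow : ∃ p i : ℕ, p.Prime ∧ a = p ^ i
  · obtain ⟨p, i, hp, rfl⟩ := hapow
    have hi : i ≠ 0 := by rintro rfl; simp at ha
    have hincomp {q} (hq : q.Prime) (hqp : q ≠ p) : ¬SymmGen (· ∣ ·) q (p ^ i) := by
      rintro (h | h)
      · exact hqp ((prime_dvd_prime_iff_eq hq hp).mp (hq.dvd_of_dvd_pow h))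
      · exact hqp ((prime_dvd_prime_iff_eq hp hq).mp ((dvd_pow_self p hi).trans h)).symm
    obtain ⟨q, hq, hqn, hqp⟩ := exists_prime_dvd_ne_of_not_prime_pow hn p
    by_cases hqb : q ∣ b
    · exact ⟨q, hqn, fun h => hincomp hq hqp (h.mpr (.of_rel hqb))⟩
    · have hcop : Coprime q (p ^ i) := (coprime_primes hq hp |>.mpr hqp).pow_right i
      refine ⟨q * p ^ i, hcop.mul_dvd_of_dvd_of_dvd hqn (hab.trans hbn),
        fun h => ?_⟩
      rcases h.mp (.of_rel_symm (dvd_mul_left _ _)) with h | h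
      · exact hqb ((dvd_mul_right q _).trans h)
      · have hbq : Coprime b q := (hq.coprime_iff_not_dvd.mpr hqb).symm
        exact hne (dvd_antisymm hab (hbq.dvd_of_dvd_mul_left h))
  · obtain ⟨p, hp, hlt⟩ := exists_prime_factorization_lt_of_dvd hb hab hne
    refine ⟨p ^ b.factorization p, (ordProj_dvd b p).trans hbn, fun h => ?_⟩
    rcases h.mpr (.of_rel (ordProj_dvd b p)) with h | h
    · rw [hp.pow_dvd_iff_le_factorization (by omega)] at h
      omega
    · obtain ⟨j, -, rfl⟩ := (dvd_prime_pow hp).mp h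
      exact hapow ⟨p, j, hp, rfl⟩

lemma eq_of_forall_symmGen_dvd_iff {n k m : ℕ} (hn : ¬∃ p i : ℕ, p.Prime ∧ n = p ^ i)
    (hkn : k ∣ n) (hk : 1 < k) (hklt : k < n) (hmn : m ∣ n)
    (h : ∀ e, e ∣ n → (SymmGen (· ∣ ·) e m ↔ SymmGen (· ∣ ·) e k)) : m = k := by
  by_contra hne
  have separated {a b : ℕ} (ha : 1 < a) (hab : a ∣ b) (hbn : b ∣ n) (hne : a ≠ b)
      (h : ∀ e, e ∣ n → (SymmGen (· ∣ ·) e a ↔ SymmGen (· ∣ ·) e b)) : False := by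
    obtain ⟨e, hen, he⟩ := exists_dvd_not_symmGen_iff hn (by omega) ha hab hbn hne
    exact he (h e hen)
  rcases (h k hkn).mpr .rfl with hkm | hmk
  · exact separated hk hkm hmn (Ne.symm hne) fun e he => (h e he).symm
  · obtain rfl | hm := (Nat.one_le_iff_ne_zero.mpr (ne_zero_of_dvd_ne_zero (by omega) hmk)).eq_or_lt
    · -- `1` and `n` are comparable with every divisor of `n`
      refine separated hk hkn dvd_rfl hklt.ne fun e he => ?_
      exact iff_of_true ((h e he).mp (.of_rel_symm (one_dvd e))) (.of_rel he)
    · exact separated hm hmk hkn hne h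

end Nat

lemma IsCyclic.mem_zpowers_of_orderOf_dvd {α : Type*} [Group α] [Finite α] [IsCyclic α]
    {x y : α} (h : orderOf x ∣ orderOf y) : x ∈ zpowers y := by
  classical
  have : Fintype α := Fintype.ofFinite α
  -- `⟨y⟩` fills `{z | z ^ orderOf y = 1}`, which has at most `orderOf y` elements
  have hsub : (zpowers y : Set α) ⊆ {z | z ^ orderOf y = 1} := fun z hz =>
    orderOf_dvd_iff_pow_eq_one.mp (orderOf_dvd_of_mem_zpowers hz)
  have hcard : {z : α | z ^ orderOf y = 1}.ncard ≤ (zpowers y : Set α).ncard := by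
    calc {z : α | z ^ orderOf y = 1}.ncard = #{z : α | z ^ orderOf y = 1} := by
          rw [← Set.ncard_coe_finset, Finset.coe_filter_univ]
      _ ≤ orderOf y := IsCyclic.card_pow_eq_one_le (orderOf_pos y)
      _ = (zpowers y : Set α).ncard := by
          rw [← Nat.card_zpowers]; exact Nat.card_coe_set_eq _
  rw [← SetLike.mem_coe, Set.eq_of_subset_of_ncard_le hsub hcard]
  exact orderOf_dvd_iff_pow_eq_one.mp h

lemma mem_zpowers_iff_orderOf_dvd {G : Type*} [Group G] [Finite G] {v x y : G}
    (hx : x ∈ zpowers v) (hy : y ∈ zpowers v) : x ∈ zpowers y ↔ orderOf x ∣ orderOf y := by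
  refine ⟨orderOf_dvd_of_mem_zpowers, fun h => ?_⟩
  obtain ⟨k, hk⟩ := IsCyclic.mem_zpowers_of_orderOf_dvd (x := (⟨x, hx⟩ : zpowers v))
    (y := ⟨y, hy⟩) (by simpa only [orderOf_mk] using h)
  exact ⟨k, congrArg Subtype.val hk⟩

lemma mem_closedNbhd_induce {V : Type*} (X : SimpleGraph V) (s : Set V) (u w : s) :
    w ∈ closedNbhd (X.induce s) u ↔ (w : V) ∈ closedNbhd X u := by
  simp [closedNbhd, Subtype.ext_iff]

lemma mem_closedNbhd_powGraph {G : Type*} [Group G] {x y : G} :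
    y ∈ closedNbhd (powGraph G) x ↔ x ∈ zpowers y ∨ y ∈ zpowers x := by
  simp only [closedNbhd, Set.mem_insert_iff, SimpleGraph.mem_neighborSet, powGraph]
  rcases eq_or_ne y x with rfl | hne
  · simp [mem_zpowers]
  · simp [hne, hne.symm]

lemma IsCCGenerator.closedNbhd_powGraph_eq {G : Type*} [Group G] {v : G}
    (hv : IsCCGenerator v) : closedNbhd (powGraph G) v = zpowers v := by
  ext x
  rw [mem_closedNbhd_powGraph, SetLike.mem_coe, or_iff_right_of_imp]
  exact fun h => hv x h ▸ mem_zpowers x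

namespace IsCCGenerator

variable {G : Type*} [Group G] [Finite G] {v : G}

lemma mem_closedNbhd_powLocal_iff (hv : IsCCGenerator v) (u x : closedNbhd (powGraph G) v) :
    x ∈ closedNbhd (powLocal G v) u ↔ SymmGen (· ∣ ·) (orderOf (x : G)) (orderOf (u : G)) := by
  have hmem (w : closedNbhd (powGraph G) v) : (w : G) ∈ zpowers v :=
    hv.closedNbhd_powGraph_eq.subset w.2
  rw [powLocal, mem_closedNbhd_induce, mem_closedNbhd_powGraph,
    mem_zpowers_iff_orderOf_dvd (hmem u) (hmem x), mem_zpowers_iff_orderOf_dvd (hmem x) (hmem u)]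
  exact or_comm

lemma closedNbhd_powLocal_eq_iff (hv : IsCCGenerator v) (u w : closedNbhd (powGraph G) v) :
    closedNbhd (powLocal G v) w = closedNbhd (powLocal G v) u ↔
      ∀ e, e ∣ orderOf v →
        (SymmGen (· ∣ ·) e (orderOf (w : G)) ↔ SymmGen (· ∣ ·) e (orderOf (u : G))) := by
  simp only [Set.ext_iff, hv.mem_closedNbhd_powLocal_iff]
  constructor
  · intro h e he
    have hpow : v ^ (orderOf v / e) ∈ closedNbhd (powGraph G) v :=
      hv.closedNbhd_powGraph_eq.superset (pow_mem (mem_zpowers v) _)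
    simpa only [orderOf_pow_orderOf_div (orderOf_pos v).ne' he] using h ⟨_, hpow⟩
  · intro h x
    exact h _ (orderOf_dvd_of_mem_zpowers (hv.closedNbhd_powGraph_eq.subset x.2))

end IsCCGenerator

lemma ncard_setOf_orderOf_eq_totient {G : Type*} [Group G] [Finite G] {v : G} {S : Set G}
    (hS : S = zpowers v) {k : ℕ} (hk : k ∣ orderOf v) :
    {w : S | orderOf (w : G) = k}.ncard = Nat.totient k := by
  classical
  subst hS
  have : Fintype (zpowers v) := Fintype.ofFinite _
  have hk' : k ∣ Fintype.card (zpowers v) := by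
    rwa [← Nat.card_eq_fintype_card, Nat.card_zpowers]
  rw [← IsCyclic.card_orderOf_eq_totient hk', ← Set.ncard_coe_finset, Finset.coe_filter_univ]
  show {w : zpowers v | orderOf (w : G) = k}.ncard = _
  simp only [Subgroup.orderOf_coe]

/-- For a CC-generator `v` whose order is not a prime power and every divisor `k` of
`o(v)` with `1 < k < o(v)`, there is a closed-twin-class of `Γ_v` of size exactly
`φ(k)`; moreover `φ(k)` divides `φ(o(v))`. -/
theorem twin_class_of_divisor_card
    {G : Type*} [Group G] [Finite G] (v : G)
    (hcc : IsCCGenerator v)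
    (hnpp : ¬ ∃ p i : ℕ, p.Prime ∧ orderOf v = p ^ i) :
    ∀ k : ℕ, k ∣ orderOf v → 1 < k → k < orderOf v →
      (∃ u : closedNbhd (powGraph G) v,
        {w : closedNbhd (powGraph G) v |
            closedNbhd (powLocal G v) w = closedNbhd (powLocal G v) u}.ncard =
          Nat.totient k) ∧
      Nat.totient k ∣ Nat.totient (orderOf v) := by
  intro k hkn hk hklt
  refine ⟨?_, Nat.totient_dvd_of_dvd hkn⟩
  have hu : v ^ (orderOf v / k) ∈ closedNbhd (powGraph G) v :=
    hcc.closedNbhd_powGraph_eq.superset (pow_mem (mem_zpowers v) _)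
  have hku : orderOf (v ^ (orderOf v / k)) = k := orderOf_pow_orderOf_div (orderOf_pos v).ne' hkn
  refine ⟨⟨_, hu⟩, ?_⟩
  have htwins : {w : closedNbhd (powGraph G) v |
      closedNbhd (powLocal G v) w = closedNbhd (powLocal G v) ⟨_, hu⟩} =
        {w : closedNbhd (powGraph G) v | orderOf (w : G) = k} := by
    ext w
    rw [Set.mem_ofPred_eq, hcc.closedNbhd_powLocal_eq_iff, Set.mem_ofPred_eq, hku]
    refine ⟨fun h => ?_, fun h e _ => by rw [h]⟩
    exact Nat.eq_of_forall_symmGen_dvd_iff hnpp hkn hk hklt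
      (orderOf_dvd_of_mem_zpowers (hcc.closedNbhd_powGraph_eq.subset w.2)) h
  rw [htwins]
  exact ncard_setOf_orderOf_eq_totient hcc.closedNbhd_powGraph_eq hkn
end

section
/- Let G be a finite group, Γ = Pow(G), and let v ∈ G be a nontrivial p-power element (o(v) = p^i, i ≥ 1, p prime) that is not a CC-generator. Suppose every u ∈ N_Γ[v] with o(u) > o(v) that is a closed-twin of v in Γ_v = Γ[N_Γ[v]] satisfies deg_Γ(u) ≤ deg_Γ(v). Let y be a closed-twin of v in Γ_v of maximum order among all closed-twins of v in Γ_v. If o(y) = p^j with j ≥ 2, then p divides the cardinality of N_Γ[v]. -/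
/-!
`N_Γ[v]` is the disjoint union of `⟨v⟩`, of order `p ^ i`, and of the elements `g` with
`⟨v⟩ < ⟨g⟩`. The latter set is a union of classes of generators of one cyclic subgroup, the
class of `g` having `φ (o g)` elements, so it suffices that `p ^ 2 ∣ o g` for each such `g`.
Such a `g` is adjacent to `v`, hence, `y` being a closed twin of `v` in `Γ_v`, equal or adjacent
to `y`: either `y ∈ ⟨g⟩` and `p ^ j ∣ o g`, or `g ∈ ⟨y⟩` is a `p`-element of order larger than
`p ^ i ≥ p`.
-/

open Subgroup

theorem eq_or_adj_of_closedNbhd_eq {V : Type*} {X : SimpleGraph V} {a b c : V}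
    (h : closedNbhd X a = closedNbhd X b) (hbc : X.Adj b c) : c = a ∨ X.Adj a c :=
  show c ∈ closedNbhd X a from h ▸ Or.inr hbc

section

variable {G : Type*} [Group G]

theorem orderOf_lt_orderOf_of_zpowers_lt [Finite G] {a b : G} (h : zpowers a < zpowers b) :
    orderOf a < orderOf b := by
  rw [← Nat.card_zpowers, ← Nat.card_zpowers]
  exact (card_le_of_le h.le).lt_of_ne fun heq => h.ne (eq_of_le_of_card_ge h.le heq.ge)

theorem Nat.Prime.dvd_totient_of_sq_dvd {p n : ℕ} (hp : p.Prime) (h : p ^ 2 ∣ n) :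
    p ∣ n.totient := by
  have := Nat.totient_dvd_of_dvd h
  rw [Nat.totient_prime_pow hp two_pos] at this
  exact (dvd_mul_right p (p - 1)).trans (by simpa using this)

theorem natCard_zpowers_eq_zpowers_eq_totient [Finite G] (g₀ : G) :
    Nat.card {g : G // zpowers g = zpowers g₀} = (orderOf g₀).totient := by
  classical
  have : Fintype (zpowers g₀) := Fintype.ofFinite _
  have e : {g : G // zpowers g = zpowers g₀} ≃ {x : zpowers g₀ // orderOf x = orderOf g₀} :=
    { toFun := fun g => ⟨⟨g, zpowers_le.mp g.2.le⟩, by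
        rw [orderOf_mk, ← Nat.card_zpowers, g.2, Nat.card_zpowers]⟩
      invFun := fun x => ⟨x.1, eq_of_le_of_card_ge (zpowers_le.mpr x.1.2)
        (by rw [Nat.card_zpowers, Nat.card_zpowers, orderOf_coe, x.2])⟩
      left_inv := fun _ => rfl
      right_inv := fun _ => rfl }
  rw [Nat.card_congr e, Nat.card_eq_fintype_card, Fintype.card_subtype,
    IsCyclic.card_orderOf_eq_totient (by rw [← Nat.card_eq_fintype_card, Nat.card_zpowers])]

theorem dvd_ncard_of_dvd_totient [Finite G] {S : Set G}
    (hS : ∀ g ∈ S, ∀ h : G, zpowers h = zpowers g → h ∈ S) {n : ℕ}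
    (hn : ∀ g ∈ S, n ∣ (orderOf g).totient) : n ∣ S.ncard := by
  classical
  have := Fintype.ofFinite G
  obtain ⟨S, rfl⟩ := S.toFinite.exists_finset_coe
  rw [Set.ncard_coe_finset, S.card_eq_sum_card_image zpowers]
  refine Finset.dvd_sum fun C hC => ?_
  obtain ⟨g, hg, rfl⟩ := Finset.mem_image.mp hC
  have hfiber :
      S.filter (zpowers · = zpowers g) = Finset.univ.filter (zpowers · = zpowers g) := by
    ext h
    simpa using fun hh => hS g hg h hh
  rw [hfiber, ← Fintype.card_subtype, ← Nat.card_eq_fintype_card, natCard_zpowers_eq_zpowers_eq_totient]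
  exact hn g hg

theorem mem_closedNbhd_powGraph_iff {v g : G} :
    g ∈ closedNbhd (powGraph G) v ↔ g ∈ zpowers v ∨ zpowers v < zpowers g := by
  by_cases hgv : g ∈ zpowers v
  · simp only [hgv, true_or, iff_true]
    by_cases h : g = v
    · exact h ▸ self_mem_closedNbhd _ g
    · exact Or.inr ⟨Ne.symm h, Or.inr hgv⟩
  · have hne : g ≠ v := fun h => hgv (h ▸ mem_zpowers g)
    simp only [hgv, false_or, SetLike.lt_iff_le_and_exists, zpowers_le]
    constructor
    · rintro (h | ⟨-, hvg | hgv'⟩)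
      · exact absurd h hne
      · exact ⟨hvg, g, mem_zpowers g, hgv⟩
      · exact absurd hgv' hgv
    · rintro ⟨hvg, -⟩
      exact Or.inr ⟨Ne.symm hne, Or.inl hvg⟩

theorem mem_zpowers_or_mem_zpowers_of_closedNbhd_powLocal_eq {v y g : G}
    (hy : y ∈ closedNbhd (powGraph G) v)
    (htwin : closedNbhd (powLocal G v) ⟨y, hy⟩ =
      closedNbhd (powLocal G v) ⟨v, self_mem_closedNbhd _ v⟩)
    (hvg : (powGraph G).Adj v g) : g ∈ zpowers y ∨ y ∈ zpowers g := by
  have hg : g ∈ closedNbhd (powGraph G) v := Or.inr hvg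
  have hvg' : (powLocal G v).Adj ⟨v, self_mem_closedNbhd _ v⟩ ⟨g, hg⟩ := hvg
  rcases eq_or_adj_of_closedNbhd_eq htwin hvg' with hgy | ⟨-, hyg | hgy⟩
  · cases congrArg Subtype.val hgy
    exact Or.inr (mem_zpowers y)
  · exact Or.inr hyg
  · exact Or.inl hgy

theorem sq_dvd_orderOf_of_closedNbhd_powLocal_eq [Finite G] {p i j : ℕ} {v y g : G}
    (hp : p.Prime) (hi : 1 ≤ i) (hv : orderOf v = p ^ i) (hy : y ∈ closedNbhd (powGraph G) v)
    (htwin : closedNbhd (powLocal G v) ⟨y, hy⟩ =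
      closedNbhd (powLocal G v) ⟨v, self_mem_closedNbhd _ v⟩)
    (hj : 2 ≤ j) (hyo : orderOf y = p ^ j) (hg : zpowers v < zpowers g) :
    p ^ 2 ∣ orderOf g := by
  have hvg : (powGraph G).Adj v g :=
    ⟨fun h => hg.ne (congrArg zpowers h), Or.inl (zpowers_le.mp hg.le)⟩
  rcases mem_zpowers_or_mem_zpowers_of_closedNbhd_powLocal_eq hy htwin hvg with hgy | hyg
  · obtain ⟨k, -, hk⟩ := (Nat.dvd_prime_pow hp).mp (hyo ▸ orderOf_dvd_of_mem_zpowers hgy)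
    have hik : i < k := by
      have := orderOf_lt_orderOf_of_zpowers_lt hg
      rwa [hv, hk, Nat.pow_lt_pow_iff_right hp.one_lt] at this
    exact hk ▸ pow_dvd_pow p (by omega)
  · exact (pow_dvd_pow p hj).trans (hyo ▸ orderOf_dvd_of_mem_zpowers hyg)

end

theorem p_dvd_card_closedNbhd_of_pPower_non_ccGenerator_general
    {G : Type*} [Group G] [Finite G] (v : G) (p i : ℕ)
    (hp : p.Prime) (hi : 1 ≤ i) (hv : orderOf v = p ^ i)
    (y : G) (hy : y ∈ closedNbhd (powGraph G) v)
    (hytwin : closedNbhd (powLocal G v) ⟨y, hy⟩ =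
      closedNbhd (powLocal G v) ⟨v, self_mem_closedNbhd _ v⟩)
    (j : ℕ) (hj : 2 ≤ j) (hyo : orderOf y = p ^ j) :
    p ∣ (closedNbhd (powGraph G) v).ncard := by
  have hN : closedNbhd (powGraph G) v = (zpowers v : Set G) ∪ {g | zpowers v < zpowers g} :=
    Set.ext fun _ => mem_closedNbhd_powGraph_iff
  have hdisj : Disjoint (zpowers v : Set G) {g | zpowers v < zpowers g} :=
    Set.disjoint_left.mpr fun _ hgv hlt => hlt.not_ge (zpowers_le.mpr hgv)
  rw [hN, Set.ncard_union_eq hdisj]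
  refine dvd_add ?_ (dvd_ncard_of_dvd_totient ?_ fun g hg => hp.dvd_totient_of_sq_dvd ?_)
  · rw [← Nat.card_coe_set_eq, SetLike.coe_sort_coe, Nat.card_zpowers, hv]
    exact dvd_pow_self p (by omega)
  · exact fun g hg h hhg => show zpowers v < zpowers h from hhg ▸ hg
  · exact sq_dvd_orderOf_of_closedNbhd_powLocal_eq hp hi hv hy hytwin hj hyo hg

/-- With the hypotheses of the lemma on nontrivial `p`-power elements that are not
CC-generators: if the maximum-order closed-twin `y` of `v` in `Γ_v` has order `p^j`
with `j ≥ 2`, then `p` divides `|N_Γ[v]|`. -/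
theorem p_dvd_card_closedNbhd_of_pPower_non_ccGenerator
    {G : Type*} [Group G] [Finite G] (v : G) (p i : ℕ)
    (hp : p.Prime) (hi : 1 ≤ i) (hv : orderOf v = p ^ i)
    (hncc : ¬ IsCCGenerator v)
    (hdeg : ∀ u : G, ∀ hu : u ∈ closedNbhd (powGraph G) v, orderOf v < orderOf u →
      closedNbhd (powLocal G v) ⟨u, hu⟩ =
        closedNbhd (powLocal G v) ⟨v, self_mem_closedNbhd _ v⟩ →
      ((powGraph G).neighborSet u).ncard ≤ ((powGraph G).neighborSet v).ncard)
    (y : G) (hy : y ∈ closedNbhd (powGraph G) v)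
    (hytwin : closedNbhd (powLocal G v) ⟨y, hy⟩ =
      closedNbhd (powLocal G v) ⟨v, self_mem_closedNbhd _ v⟩)
    (hymax : ∀ z : G, ∀ hz : z ∈ closedNbhd (powGraph G) v,
      closedNbhd (powLocal G v) ⟨z, hz⟩ =
        closedNbhd (powLocal G v) ⟨v, self_mem_closedNbhd _ v⟩ →
      orderOf z ≤ orderOf y)
    (j : ℕ) (hj : 2 ≤ j) (hyo : orderOf y = p ^ j) :
    p ∣ (closedNbhd (powGraph G) v).ncard :=
  p_dvd_card_closedNbhd_of_pPower_non_ccGenerator_general v p i hp hi hv y hy hytwin j hj hyo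
end
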